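/- Let (P₁,…,P_J) be a multivariate species sampling process with non-atomic base measure P₀, and let X be a sample from (P₁,…,P_J). Then for all j ≠ k in {1,…,J} and every Borel set A with Var[P_j(A)] > 0 and Var[P_k(A)] > 0: Corr[P_j(A), P_k(A)] = ℙ(X_{j,1} = X_{k,1}) / ( √ℙ(X_{j,1} = X_{j,2}) · √ℙ(X_{k,1} = X_{k,2}) ). In particular, the correlation does not depend on the choice of the set A. -/

import Mathlib

/-!
Write `P_j = ∑ₕ π_{j,h} δ_{θₕ} + (1 - ∑ₕ π_{j,h}) P₀`. Expanding `P_j ⊗ P_k` atom by atom and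
using that the atoms are i.i.d. `P₀` and independent of the weights, only pairs of equal atoms
charge the diagonal, so the mean measure is
`E[P_j ⊗ P_k] = Q_{jk} • (x ↦ (x, x))_* P₀ + (1 - Q_{jk}) • P₀ ⊗ P₀` with
`Q_{jk} = E ∑ₕ π_{j,h} π_{k,h}`. Evaluating it on `A × 𝕏`, on `A × A` and on the diagonal (which
`P₀ ⊗ P₀` does not charge) gives `E P_j(A) = P₀(A)`,
`Cov(P_j(A), P_k(A)) = Q_{jk} P₀(A) (1 - P₀(A))` and `ℙ(X_{j,i} = X_{k,i'}) = Q_{jk}`; the factor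
`P₀(A) (1 - P₀(A))` cancels in the correlation.
-/

open MeasureTheory ProbabilityTheory
open scoped ENNReal

namespace MSSP

variable {Ω : Type*} [MeasurableSpace Ω] {𝕏 : Type*} [MeasurableSpace 𝕏]

/-- The species-sampling mixture measure `∑ₕ wₕ δ_{aₕ} + (1 - ∑ₕ wₕ) P₀`. -/
noncomputable def mixM (P₀ : Measure 𝕏) (w : ℕ → ℝ) (a : ℕ → 𝕏) : Measure 𝕏 :=
  Measure.sum (fun h => ENNReal.ofReal (w h) • Measure.dirac (a h)) +
    ENNReal.ofReal (1 - ∑' h, w h) • P₀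

/-- `(P j)_{j}` is a multivariate species sampling process with base measure `P₀`,
weight array `π` and atoms `θ`. -/
structure IsMSSPwith {ι : Type*} (Pr : Measure Ω) (P₀ : Measure 𝕏)
    (P : ι → Ω → Measure 𝕏) (π : ι → ℕ → Ω → ℝ) (θ : ℕ → Ω → 𝕏) : Prop where
  measP : ∀ j (A : Set 𝕏), MeasurableSet A → Measurable fun ω => P j ω A
  probP : ∀ j ω, IsProbabilityMeasure (P j ω)
  measπ : ∀ j h, Measurable (π j h)
  subprob : ∀ j, ∀ᵐ ω ∂Pr, (∀ h, 0 ≤ π j h ω ∧ π j h ω ≤ 1) ∧ ∑' h, π j h ω ≤ 1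
  measθ : ∀ h, Measurable (θ h)
  lawθ : ∀ h, Measure.map (θ h) Pr = P₀
  iidθ : iIndepFun θ Pr
  indepθπ : IndepFun (fun ω (h : ℕ) => θ h ω) (fun ω (j : ι) (h : ℕ) => π j h ω) Pr
  repr : ∀ j, ∀ᵐ ω ∂Pr, P j ω = mixM P₀ (fun h => π j h ω) (fun h => θ h ω)

/-- `(P j)_j` is a multivariate species sampling process with base measure `P₀`. -/
def IsMSSP {ι : Type*} (Pr : Measure Ω) (P₀ : Measure 𝕏)
    (P : ι → Ω → Measure 𝕏) : Prop :=
  ∃ π θ, IsMSSPwith Pr P₀ P π θ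

/-- `X` is a sample from the vector of random probability measures `P`:
conditionally on `P` the entries are independent, with `X j i` distributed as `P j`. -/
def IsSample {ι : Type*} (Pr : Measure Ω) (P : ι → Ω → Measure 𝕏)
    (X : ι → ℕ → Ω → 𝕏) : Prop :=
  (∀ j i, Measurable (X j i)) ∧
  ∀ (s : Finset (ι × ℕ)) (A : ι × ℕ → Set 𝕏), (∀ p ∈ s, MeasurableSet (A p)) →
    Pr {ω | ∀ p ∈ s, X p.1 p.2 ω ∈ A p} = ∫⁻ ω, ∏ p ∈ s, P p.1 ω (A p) ∂Pr

/-- Covariance of two real random variables. -/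
noncomputable def covR (Pr : Measure Ω) (f g : Ω → ℝ) : ℝ :=
  ∫ ω, f ω * g ω ∂Pr - (∫ ω, f ω ∂Pr) * (∫ ω, g ω ∂Pr)

/-- Correlation of two real random variables. -/
noncomputable def corrR (Pr : Measure Ω) (f g : Ω → ℝ) : ℝ :=
  covR Pr f g / (Real.sqrt (variance f Pr) * Real.sqrt (variance g Pr))

end MSSP

open Set

namespace MeasureTheory.Measure

variable {α β : Type*} [MeasurableSpace α] [MeasurableSpace β]

lemma sum_option {ι : Type*} (μ : Option ι → Measure α) :
    Measure.sum μ = μ none + Measure.sum fun i => μ (some i) := by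
  ext s hs
  rw [add_apply, sum_apply _ hs, sum_apply _ hs, ENNReal.tsum_eq_add_tsum_ite none,
    ← Option.some_injective _ |>.tsum_eq]
  · simp
  · intro i hi
    cases i <;> simp_all

lemma prod_sum_smul {ι ι' : Type*} [Countable ι'] (c : ι → ℝ≥0∞) (μ : ι → Measure α)
    (d : ι' → ℝ≥0∞) (ν : ι' → Measure β) [∀ i, SFinite (ν i)] :
    (Measure.sum fun i => c i • μ i).prod (Measure.sum fun i => d i • ν i) =
      Measure.sum fun p : ι × ι' => (c p.1 * d p.2) • (μ p.1).prod (ν p.2) := by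
  rw [prod_sum]
  congr! 2 with p
  rw [prod_smul_left, prod_smul_right, smul_smul]

lemma prod_diagonal_eq_zero [MeasurableEq α] (μ ν : Measure α) [SFinite ν]
    [NullSingletonClass ν] : μ.prod ν (diagonal α) = 0 := by
  have : ∀ x : α, Prod.mk x ⁻¹' diagonal α = {x} := fun x => by ext; simp [eq_comm]
  simp [prod_apply measurableSet_diagonal, this]

end MeasureTheory.Measure

lemma ENNReal.tsum_mul_ite_diag_isSome {γ : Type*} [DecidableEq γ] (E : Option γ × Option γ → ℝ≥0∞)
    (D R : ℝ≥0∞) :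
    ∑' p, E p * (if p.1 = p.2 ∧ p.1.isSome then D else R) =
      (∑' h, E (some h, some h)) * D +
        (∑' p, if p.1 = p.2 ∧ p.1.isSome then 0 else E p) * R := by
  have hdiag : ∑' p, (if p.1 = p.2 ∧ p.1.isSome then E p else 0) = ∑' h, E (some h, some h) := by
    have hinj : Function.Injective fun h : γ => (some h, some h) := fun a b h => by simpa using h
    rw [← hinj.tsum_eq]
    · simp
    · rintro ⟨_ | a, b⟩ hp <;> simp at hp
      exact ⟨a, by simp [hp.1]⟩
  rw [← hdiag, ← ENNReal.tsum_mul_right, ← ENNReal.tsum_mul_right, ← ENNReal.tsum_add]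
  refine tsum_congr fun p => ?_
  split_ifs <;> simp

lemma Real.mul_div_sqrt_mul_sqrt_cancel {c : ℝ} (hc : 0 < c) (x y z : ℝ) :
    c * z / (√(c * x) * √(c * y)) = z / (√x * √y) := by
  rw [Real.sqrt_mul hc.le, Real.sqrt_mul hc.le, mul_mul_mul_comm, Real.mul_self_sqrt hc.le,
    mul_div_mul_left _ _ hc.ne']

namespace MSSP

variable {Ω : Type*} [MeasurableSpace Ω] {𝕏 : Type*} [MeasurableSpace 𝕏]

lemma variance_eq_covR {Pr : Measure Ω} [IsProbabilityMeasure Pr] {f : Ω → ℝ}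
    (hf : MemLp f 2 Pr) : variance f Pr = covR Pr f f := by
  rw [← covariance_self hf.aemeasurable, covariance_eq_sub hf hf, covR]
  rfl

section Sample

variable {ι : Type*} {Pr : Measure Ω} {X : ι → ℕ → Ω → 𝕏} {a b : ι} {i i' : ℕ}

lemma IsSample.measure_pair_mem {P : ι → Ω → Measure 𝕏} (hX : IsSample Pr P X)
    (hne : (a, i) ≠ (b, i')) {A B : Set 𝕏} (hA : MeasurableSet A) (hB : MeasurableSet B) :
    Pr {ω | X a i ω ∈ A ∧ X b i' ω ∈ B} = ∫⁻ ω, P a ω A * P b ω B ∂Pr := by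
  classical
  have h := hX.2 {(a, i), (b, i')} (fun q => if q = (a, i) then A else B)
    (by simp [hA, hB, apply_ite])
  simpa [Finset.prod_pair hne, hne.symm] using h

lemma IsSample.map_pair [IsProbabilityMeasure Pr] {κ : ι → Kernel Ω 𝕏}
    [∀ a, IsMarkovKernel (κ a)] (hX : IsSample Pr (fun a => κ a) X) (hne : (a, i) ≠ (b, i')) :
    Pr.map (fun ω => (X a i ω, X b i' ω)) = Pr.bind (κ a ×ₖ κ b) := by
  have hXm : Measurable fun ω => (X a i ω, X b i' ω) := (hX.1 a i).prodMk (hX.1 b i')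
  have := Measure.isProbabilityMeasure_map (μ := Pr) hXm.aemeasurable
  refine ext_of_generate_finite _ generateFrom_prod.symm isPiSystem_prod ?_ ?_
  · rintro _ ⟨A, hA, B, hB, rfl⟩
    rw [Measure.map_apply hXm (hA.prod hB),
      Measure.bind_apply (hA.prod hB) (κ a ×ₖ κ b).measurable.aemeasurable]
    simpa [Kernel.prod_apply, Measure.prod_prod, Set.preimage, Set.mem_prod] using
      hX.measure_pair_mem hne hA hB
  · simp [Measure.bind_apply MeasurableSet.univ (κ a ×ₖ κ b).measurable.aemeasurable]

end Sample

/-- Option-indexed decomposition of `mixM P₀ w t`: the index `some h` is the atom `δ_{t h}`,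
the index `none` is the diffuse part `P₀`. -/
noncomputable def atomWeight (w : ℕ → ℝ) : Option ℕ → ℝ≥0∞
  | some h => ENNReal.ofReal (w h)
  | none => 1 - ∑' h, ENNReal.ofReal (w h)

noncomputable def atomKernel (P₀ : Measure 𝕏) : Option ℕ → Kernel (ℕ → 𝕏) 𝕏
  | some h => Kernel.deterministic (fun t => t h) (measurable_pi_apply h)
  | none => Kernel.const _ P₀

section Atoms

variable {P₀ : Measure 𝕏}

instance [IsProbabilityMeasure P₀] (i : Option ℕ) : IsMarkovKernel (atomKernel P₀ i) := by
  cases i <;> dsimp [atomKernel] <;> infer_instance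

lemma measurable_atomWeight (i : Option ℕ) : Measurable fun w : ℕ → ℝ => atomWeight w i := by
  cases i with
  | none => exact measurable_const.sub <| .tsum fun h =>
      ENNReal.measurable_ofReal.comp (measurable_pi_apply h)
  | some h => exact ENNReal.measurable_ofReal.comp (measurable_pi_apply h)

lemma mixM_eq_sum_atomKernel {w : ℕ → ℝ} (hw : ∀ h, 0 ≤ w h) (hsum : Summable w) (t : ℕ → 𝕏) :
    mixM P₀ w t = Measure.sum fun i => atomWeight w i • atomKernel P₀ i t := by
  rw [Measure.sum_option, mixM, add_comm, ENNReal.ofReal_sub _ (tsum_nonneg hw),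
    ENNReal.ofReal_one, ENNReal.ofReal_tsum_of_nonneg hw hsum]
  simp [atomWeight, atomKernel, Kernel.deterministic_apply]

lemma summable_of_isProbabilityMeasure_mixM {w : ℕ → ℝ} (hw : ∀ h, 0 ≤ w h) {t : ℕ → 𝕏}
    [IsProbabilityMeasure (mixM P₀ w t)] : Summable w := by
  have hmass := measure_univ (μ := mixM P₀ w t)
  rw [mixM, Measure.add_apply, Measure.sum_apply _ MeasurableSet.univ] at hmass
  have hle : ∑' h, ENNReal.ofReal (w h) ≤ 1 := by
    simpa using le_of_le_of_eq le_self_add hmass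
  exact (ENNReal.summable_toReal (ne_top_of_le_ne_top ENNReal.one_ne_top hle)).congr fun h =>
    ENNReal.toReal_ofReal (hw h)

variable [IsProbabilityMeasure P₀] {Pr : Measure Ω} [IsProbabilityMeasure Pr] {θ : ℕ → Ω → 𝕏}

lemma lintegral_atomKernel_prod_apply (hθ : ∀ h, Measurable (θ h))
    (hlaw : ∀ h, Pr.map (θ h) = P₀) (hiid : iIndepFun θ Pr) (i i' : Option ℕ)
    {S : Set (𝕏 × 𝕏)} (hS : MeasurableSet S) :
    ∫⁻ ω, (atomKernel P₀ i ×ₖ atomKernel P₀ i') (fun h => θ h ω) S ∂Pr =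
      if i = i' ∧ i.isSome then P₀ {x | (x, x) ∈ S} else P₀.prod P₀ S := by
  have hcomp : ∀ h {g : 𝕏 → ℝ≥0∞}, Measurable g → ∫⁻ ω, g (θ h ω) ∂Pr = ∫⁻ x, g x ∂P₀ :=
    fun h g hg => by rw [← hlaw h, lintegral_map hg (hθ h)]
  cases i with
  | none =>
    cases i' with
    | none => simp [atomKernel, Kernel.prod_apply]
    | some l =>
      simp only [atomKernel, Kernel.prod_apply, Kernel.const_apply, Kernel.deterministic_apply,
        Measure.prod_dirac, Measure.map_apply measurable_prodMk_right hS]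
      rw [hcomp l (measurable_measure_prodMk_right hS), Measure.prod_apply_symm hS]
      simp
  | some h =>
    cases i' with
    | none =>
      simp only [atomKernel, Kernel.prod_apply, Kernel.const_apply, Kernel.deterministic_apply,
        Measure.dirac_prod, Measure.map_apply measurable_prodMk_left hS]
      rw [hcomp h (measurable_measure_prodMk_left hS), Measure.prod_apply hS]
      simp
    | some l =>
      simp only [atomKernel, Kernel.prod_apply, Kernel.deterministic_apply,
        Measure.dirac_prod_dirac, Measure.dirac_apply' _ hS]
      have hpair : Measurable fun ω => (θ h ω, θ l ω) := (hθ h).prodMk (hθ l)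
      rw [← lintegral_map (measurable_one.indicator hS) hpair, lintegral_indicator_one hS]
      by_cases hhl : h = l
      · subst hhl
        have hdiag : MeasurableSet {x : 𝕏 | (x, x) ∈ S} := measurable_id.prodMk measurable_id hS
        rw [Measure.map_apply hpair hS, if_pos ⟨rfl, rfl⟩, ← hlaw h,
          Measure.map_apply (hθ h) hdiag]
        rfl
      · rw [(indepFun_iff_map_prod_eq_prod_map_map (hθ h).aemeasurable
          (hθ l).aemeasurable).mp (hiid.indepFun hhl), hlaw h, hlaw l]
        simp [hhl]

end Atoms

noncomputable def expectedOverlap {ι : Type*} (Pr : Measure Ω) (π : ι → ℕ → Ω → ℝ) (j k : ι) :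
    ℝ≥0∞ :=
  ∫⁻ ω, ∑' h, ENNReal.ofReal (π j h ω) * ENNReal.ofReal (π k h ω) ∂Pr

namespace IsMSSPwith

variable {ι : Type*} {Pr : Measure Ω} {P₀ : Measure 𝕏} {P : ι → Ω → Measure 𝕏}
  {π : ι → ℕ → Ω → ℝ} {θ : ℕ → Ω → 𝕏} (hm : IsMSSPwith Pr P₀ P π θ)
include hm

lemma ae_eq_sum_atomKernel (j : ι) :
    ∀ᵐ ω ∂Pr, P j ω =
      Measure.sum fun i => atomWeight (fun h => π j h ω) i • atomKernel P₀ i fun h => θ h ω := by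
  filter_upwards [hm.subprob j, hm.repr j] with ω hsub hrepr
  have hw : ∀ h, 0 ≤ π j h ω := fun h => (hsub.1 h).1
  have := hm.probP j ω
  rw [hrepr] at this
  rw [hrepr, mixM_eq_sum_atomKernel hw
    (summable_of_isProbabilityMeasure_mixM (P₀ := P₀) (t := fun h => θ h ω) hw)]

lemma lintegral_mul_eq_mul_lintegral {G : (ι → ℕ → ℝ) → ℝ≥0∞} {F : (ℕ → 𝕏) → ℝ≥0∞}
    (hG : Measurable G) (hF : Measurable F) :
    ∫⁻ ω, G (fun j h => π j h ω) * F (fun h => θ h ω) ∂Pr =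
      (∫⁻ ω, G fun j h => π j h ω ∂Pr) * ∫⁻ ω, F fun h => θ h ω ∂Pr := by
  have hπ : Measurable fun ω j h => π j h ω :=
    measurable_pi_lambda _ fun j => measurable_pi_lambda _ fun h => hm.measπ j h
  have hθ : Measurable fun ω h => θ h ω := measurable_pi_lambda _ hm.measθ
  exact lintegral_mul_eq_lintegral_mul_lintegral_of_indepFun (hG.comp hπ) (hF.comp hθ)
    (hm.indepθπ.symm.comp hG hF)

lemma memLp_toReal [IsFiniteMeasure Pr] (j : ι) {A : Set 𝕏} (hA : MeasurableSet A) :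
    MemLp (fun ω => (P j ω A).toReal) 2 Pr := by
  have := hm.probP
  refine MemLp.of_bound (hm.measP j A hA).ennreal_toReal.aestronglyMeasurable 1
    (ae_of_all _ fun ω => ?_)
  simpa using ENNReal.toReal_mono ENNReal.one_ne_top prob_le_one

variable [IsProbabilityMeasure Pr] [IsProbabilityMeasure P₀]

lemma exists_lintegral_prod_apply (j k : ι) :
    ∃ M, ∀ S : Set (𝕏 × 𝕏), MeasurableSet S →
      ∫⁻ ω, (P j ω).prod (P k ω) S ∂Pr =
        expectedOverlap Pr π j k * P₀ {x | (x, x) ∈ S} + M * P₀.prod P₀ S := by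
  set E : Option ℕ × Option ℕ → ℝ≥0∞ := fun p =>
    ∫⁻ ω, atomWeight (fun h => π j h ω) p.1 * atomWeight (fun h => π k h ω) p.2 ∂Pr
  have hw : ∀ j i, Measurable fun ω => atomWeight (fun h => π j h ω) i := fun j i =>
    (measurable_atomWeight i).comp (measurable_pi_lambda _ (hm.measπ j))
  refine ⟨∑' p, if p.1 = p.2 ∧ p.1.isSome then 0 else E p, fun S hS => ?_⟩
  have hQ : expectedOverlap Pr π j k = ∑' h, E (some h, some h) :=
    lintegral_tsum fun h => ((hw j (some h)).mul (hw k (some h))).aemeasurable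
  rw [hQ, ← ENNReal.tsum_mul_ite_diag_isSome]
  calc ∫⁻ ω, (P j ω).prod (P k ω) S ∂Pr
      = ∫⁻ ω, ∑' p : Option ℕ × Option ℕ,
          atomWeight (fun h => π j h ω) p.1 * atomWeight (fun h => π k h ω) p.2 *
            (atomKernel P₀ p.1 ×ₖ atomKernel P₀ p.2) (fun h => θ h ω) S ∂Pr := by
        refine lintegral_congr_ae ?_
        filter_upwards [hm.ae_eq_sum_atomKernel j, hm.ae_eq_sum_atomKernel k] with ω hj hk
        simp [hj, hk, Measure.prod_sum_smul, Measure.sum_apply _ hS, Kernel.prod_apply]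
    _ = ∑' p : Option ℕ × Option ℕ, ∫⁻ ω,
          atomWeight (fun h => π j h ω) p.1 * atomWeight (fun h => π k h ω) p.2 *
            (atomKernel P₀ p.1 ×ₖ atomKernel P₀ p.2) (fun h => θ h ω) S ∂Pr :=
        lintegral_tsum fun p => (((hw j p.1).mul (hw k p.2)).mul
          ((Kernel.measurable_coe _ hS).comp (measurable_pi_lambda _ hm.measθ))).aemeasurable
    _ = _ := by
        refine tsum_congr fun p => ?_
        rw [hm.lintegral_mul_eq_mul_lintegral
          (G := fun w => atomWeight (w j) p.1 * atomWeight (w k) p.2)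
          (((measurable_atomWeight _).comp (measurable_pi_apply j)).mul
            ((measurable_atomWeight _).comp (measurable_pi_apply k)))
          (Kernel.measurable_coe _ hS),
          lintegral_atomKernel_prod_apply hm.measθ hm.lawθ hm.iidθ _ _ hS]

lemma lintegral_prod_apply (j k : ι) {S : Set (𝕏 × 𝕏)} (hS : MeasurableSet S) :
    ∫⁻ ω, (P j ω).prod (P k ω) S ∂Pr =
      expectedOverlap Pr π j k * P₀ {x | (x, x) ∈ S} +
        (1 - expectedOverlap Pr π j k) * P₀.prod P₀ S := by
  have := hm.probP
  obtain ⟨M, hM⟩ := hm.exists_lintegral_prod_apply j k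
  have hmass : M + expectedOverlap Pr π j k = 1 := by
    simpa [add_comm] using (hM univ MeasurableSet.univ).symm
  rw [hM S hS, ENNReal.eq_sub_of_add_eq' ENNReal.one_ne_top hmass]

lemma expectedOverlap_le_one (j k : ι) : expectedOverlap Pr π j k ≤ 1 := by
  have := hm.probP
  have hmass := hm.lintegral_prod_apply j k MeasurableSet.univ
  simp only [measure_univ, lintegral_const, mul_one, mem_univ, ofPred_true] at hmass
  exact hmass ▸ le_self_add

lemma lintegral_apply (j : ι) {A : Set 𝕏} (hA : MeasurableSet A) :
    ∫⁻ ω, P j ω A ∂Pr = P₀ A := by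
  have := hm.probP
  have hmass := hm.lintegral_prod_apply j j MeasurableSet.univ
  have hmean := hm.lintegral_prod_apply j j (hA.prod MeasurableSet.univ)
  simp only [measure_univ, lintegral_const, mul_one, mem_univ, ofPred_true,
    Measure.prod_prod] at hmass hmean
  simpa [← add_mul, ← hmass] using hmean

lemma lintegral_mul_apply (j k : ι) {A : Set 𝕏} (hA : MeasurableSet A) :
    ∫⁻ ω, P j ω A * P k ω A ∂Pr =
      expectedOverlap Pr π j k * P₀ A + (1 - expectedOverlap Pr π j k) * (P₀ A * P₀ A) := by
  have := hm.probP
  simpa [Measure.prod_prod] using hm.lintegral_prod_apply j k (hA.prod hA)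

lemma measure_eq_eq_expectedOverlap [MeasurableEq 𝕏] [NullSingletonClass P₀]
    {X : ι → ℕ → Ω → 𝕏} (hX : IsSample Pr P X) {a b : ι} {i i' : ℕ} (hne : (a, i) ≠ (b, i')) :
    Pr {ω | X a i ω = X b i' ω} = expectedOverlap Pr π a b := by
  let κ : ι → Kernel Ω 𝕏 := fun j =>
    ⟨P j, Measure.measurable_of_measurable_coe _ fun s hs => hm.measP j s hs⟩
  have : ∀ j, IsMarkovKernel (κ j) := fun j => ⟨hm.probP j⟩
  have hpair := congrArg (· (diagonal 𝕏)) (hX.map_pair (κ := κ) hne)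
  simp only [Measure.map_apply ((hX.1 a i).prodMk (hX.1 b i')) measurableSet_diagonal,
    Measure.bind_apply measurableSet_diagonal (κ a ×ₖ κ b).measurable.aemeasurable,
    Kernel.prod_apply] at hpair
  change Pr ((fun ω => (X a i ω, X b i' ω)) ⁻¹' diagonal 𝕏) = _
  rw [hpair]
  refine (hm.lintegral_prod_apply a b measurableSet_diagonal).trans ?_
  simp [Measure.prod_diagonal_eq_zero]

lemma covR_toReal_eq (j k : ι) {A : Set 𝕏} (hA : MeasurableSet A) :
    covR Pr (fun ω => (P j ω A).toReal) (fun ω => (P k ω A).toReal) =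
      ((P₀ A).toReal - (P₀ A).toReal ^ 2) * (expectedOverlap Pr π j k).toReal := by
  have := hm.probP
  have hPA : ∀ j, Measurable fun ω => P j ω A := fun j => hm.measP j A hA
  have hfin : ∀ j ω, P j ω A < ⊤ := fun j ω => measure_lt_top _ _
  have hmean : ∀ j, ∫ ω, (P j ω A).toReal ∂Pr = (P₀ A).toReal := fun j => by
    rw [integral_toReal (hPA j).aemeasurable (ae_of_all _ (hfin j)), hm.lintegral_apply j hA]
  have hprod : ∫ ω, (P j ω A).toReal * (P k ω A).toReal ∂Pr =
      (expectedOverlap Pr π j k * P₀ A +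
        (1 - expectedOverlap Pr π j k) * (P₀ A * P₀ A)).toReal := by
    simp_rw [← ENNReal.toReal_mul]
    rw [integral_toReal ((hPA j).fun_mul (hPA k)).aemeasurable
      (ae_of_all _ fun ω => ENNReal.mul_lt_top (hfin j ω) (hfin k ω)),
      hm.lintegral_mul_apply j k hA]
  have hQ : expectedOverlap Pr π j k ≠ ⊤ :=
    ne_top_of_le_ne_top ENNReal.one_ne_top (hm.expectedOverlap_le_one j k)
  rw [covR, hprod, hmean, hmean, ENNReal.toReal_add (by finiteness) (by finiteness),
    ENNReal.toReal_mul, ENNReal.toReal_mul, ENNReal.toReal_mul,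
    ENNReal.toReal_sub_of_le (hm.expectedOverlap_le_one j k) ENNReal.one_ne_top,
    ENNReal.toReal_one]
  ring

end IsMSSPwith

theorem mSSP_correlation_general {Ω : Type*} [MeasurableSpace Ω] {𝕏 : Type*} [MeasurableSpace 𝕏]
    [StandardBorelSpace 𝕏] {ι : Type*}
    (Pr : Measure Ω) [IsProbabilityMeasure Pr]
    (P₀ : Measure 𝕏) [IsProbabilityMeasure P₀] [NullSingletonClass P₀]
    (P : ι → Ω → Measure 𝕏) (hP : IsMSSP Pr P₀ P)
    (X : ι → ℕ → Ω → 𝕏) (hX : IsSample Pr P X)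
    (j k : ι) (hjk : j ≠ k) (A : Set 𝕏) (hA : MeasurableSet A)
    (hVj : 0 < variance (fun ω => (P j ω A).toReal) Pr) :
    corrR Pr (fun ω => (P j ω A).toReal) (fun ω => (P k ω A).toReal)
      = (Pr {ω | X j 0 ω = X k 0 ω}).toReal /
        (Real.sqrt (Pr {ω | X j 0 ω = X j 1 ω}).toReal *
          Real.sqrt (Pr {ω | X k 0 ω = X k 1 ω}).toReal) := by
  obtain ⟨π, θ, hm⟩ := hP
  rw [corrR, variance_eq_covR (hm.memLp_toReal j hA), variance_eq_covR (hm.memLp_toReal k hA),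
    hm.covR_toReal_eq j k hA, hm.covR_toReal_eq j j hA, hm.covR_toReal_eq k k hA,
    hm.measure_eq_eq_expectedOverlap hX (by simp [hjk]),
    hm.measure_eq_eq_expectedOverlap hX (by simp), hm.measure_eq_eq_expectedOverlap hX (by simp)]
  rw [variance_eq_covR (hm.memLp_toReal j hA), hm.covR_toReal_eq j j hA] at hVj
  exact Real.mul_div_sqrt_mul_sqrt_cancel (pos_of_mul_pos_left hVj ENNReal.toReal_nonneg) _ _ _

/-- For a multivariate species sampling process, the correlation between
`P j (A)` and `P k (A)` (for `j ≠ k`, on any set `A` where both variances are positive) equals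
the across-group tie probability divided by the geometric mean of the within-group tie
probabilities; in particular it does not depend on `A`. -/
theorem mSSP_correlation {Ω : Type*} [MeasurableSpace Ω] {𝕏 : Type*} [MeasurableSpace 𝕏]
    [StandardBorelSpace 𝕏] {ι : Type*}
    (Pr : Measure Ω) [IsProbabilityMeasure Pr]
    (P₀ : Measure 𝕏) [IsProbabilityMeasure P₀] [NullSingletonClass P₀]
    (P : ι → Ω → Measure 𝕏) (hP : IsMSSP Pr P₀ P)
    (X : ι → ℕ → Ω → 𝕏) (hX : IsSample Pr P X)
    (j k : ι) (hjk : j ≠ k) (A : Set 𝕏) (hA : MeasurableSet A)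
    (hVj : 0 < variance (fun ω => (P j ω A).toReal) Pr)
    (hVk : 0 < variance (fun ω => (P k ω A).toReal) Pr) :
    corrR Pr (fun ω => (P j ω A).toReal) (fun ω => (P k ω A).toReal)
      = (Pr {ω | X j 0 ω = X k 0 ω}).toReal /
        (Real.sqrt (Pr {ω | X j 0 ω = X j 1 ω}).toReal *
          Real.sqrt (Pr {ω | X k 0 ω = X k 1 ω}).toReal) :=
  mSSP_correlation_general Pr P₀ P hP X hX j k hjk A hA hVj

end MSSP
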